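/- arXiv:1706.02503 — 4 statements merged into one kernel-verified Lean document; each statement's English description precedes it below -/
import Mathlib

section
/- For every real k and every natural number m: Σ_{j=0}^{2m} (−1)^j (k)_j (k)_{2m−j} / (j! (2m−j)!) = (k)_m / m!. -/
open Real MeasureTheory

/-- Pochhammer symbol `(a)_m = a(a+1)⋯(a+m-1)`. -/
noncomputable def poch (a : ℝ) (m : ℕ) : ℝ := (ascPochhammer ℝ m).eval a

/-- Confluent hypergeometric function `₁F₁(a, c; z)`. -/
noncomputable def oneF1 (a c z : ℝ) : ℝ :=
  ∑' m : ℕ, poch a m / poch c m * z ^ m / (Nat.factorial m)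

/-- Gegenbauer (ultraspherical) polynomial `C_j^{(k)}(x)`. -/
noncomputable def geg (j : ℕ) (k x : ℝ) : ℝ :=
  ∑ l ∈ Finset.range (j / 2 + 1),
    (-1 : ℝ) ^ l * poch k (j - l) / ((Nat.factorial l : ℝ) * (Nat.factorial (j - 2 * l))) *
      (2 * x) ^ (j - 2 * l)

/-- Integral over the standard simplex `Σ_p` in the coordinates `(u_1, …, u_{p-1})`,
with `u_p := 1 - u_1 - ⋯ - u_{p-1}`. -/
noncomputable def simplexIntegral (p : ℕ) (f : (Fin p → ℝ) → ℝ) : ℝ :=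
  ∫ u in {u : Fin (p - 1) → ℝ | (∀ s, 0 ≤ u s) ∧ ∑ s, u s ≤ 1},
    f (fun i => if h : (i : ℕ) < p - 1 then u ⟨i, h⟩ else 1 - ∑ s, u s)

/-!
Since `(k)_j / j! = (-1)^j binom(-k, j)`, both sides are polynomials in `k`. At `k = -n` for
`n : ℕ` the identity is the comparison of the coefficients of `X^(2m)` in
`(1 - X)^n (1 + X)^n = (1 - X^2)^n`, and a polynomial vanishing at every negative integer is zero.
-/

open Polynomial Finset Nat

theorem Polynomial.coeff_comp_neg_X {R : Type*} [CommRing R] (p : R[X]) (j : ℕ) :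
    (p.comp (-X)).coeff j = (-1) ^ j * p.coeff j := by
  induction p using Polynomial.induction_on' with
  | add p q hp hq => simp only [add_comp, coeff_add, hp, hq, mul_add]
  | monomial k a =>
    have : (monomial k a).comp (-X) = C ((-1) ^ k * a) * X ^ k := by
      rw [← C_mul_X_pow_eq_monomial, mul_comp, C_comp, X_pow_comp, neg_pow, C_mul, C_pow, C_neg,
        C_1]
      ring
    rw [this, coeff_C_mul_X_pow, coeff_monomial]
    rcases eq_or_ne j k with rfl | h
    · simp
    · simp [h, h.symm]

theorem Polynomial.coeff_one_sub_X_pow {R : Type*} [CommRing R] (n j : ℕ) :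
    ((1 - X : R[X]) ^ n).coeff j = (-1) ^ j * n.choose j := by
  have h : (1 - X : R[X]) ^ n = ((X + 1) ^ n).comp (-X) := by
    rw [pow_comp, add_comp, X_comp, one_comp, neg_add_eq_sub]
  rw [h, coeff_comp_neg_X, coeff_X_add_one_pow]

theorem Nat.sum_range_neg_one_pow_mul_choose_mul_choose {R : Type*} [CommRing R] (n m : ℕ) :
    ∑ j ∈ range (2 * m + 1), (-1 : R) ^ j * n.choose j * n.choose (2 * m - j) =
      (-1) ^ m * n.choose m := by
  have h : ((1 - X) ^ n * (X + 1) ^ n : R[X]) = expand R 2 ((1 - X) ^ n) := by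
    rw [← mul_pow, map_pow, map_sub, map_one, expand_X]
    ring
  have := congrArg (coeff · (2 * m)) h
  simp only [coeff_mul, Nat.sum_antidiagonal_eq_sum_range_succ_mk, coeff_expand_mul' two_pos,
    coeff_one_sub_X_pow, coeff_X_add_one_pow] at this
  simpa [mul_assoc] using this

theorem poch_neg_natCast_div_factorial (n j : ℕ) :
    poch (-n) j / j ! = (-1) ^ j * n.choose j := by
  rw [poch, ascPochhammer_eval_neg_eq_descPochhammer, cast_choose_eq_descPochhammer_div,
    mul_div_assoc]

theorem sum_range_neg_one_pow_mul_poch_neg_natCast (n m : ℕ) :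
    ∑ j ∈ range (2 * m + 1),
        (-1) ^ j * (poch (-n) j / j !) * (poch (-n) (2 * m - j) / (2 * m - j) !) =
      poch (-n) m / m ! := by
  rw [poch_neg_natCast_div_factorial, ← sum_range_neg_one_pow_mul_choose_mul_choose]
  refine sum_congr rfl fun j hj => ?_
  have hsign : (-1 : ℝ) ^ (2 * m - j) = (-1) ^ j := by
    have : (2 * m - j) % 2 = j % 2 := by grind
    rw [neg_one_pow_eq_pow_mod_two, this, ← neg_one_pow_eq_pow_mod_two]
  have hsq : (-1 : ℝ) ^ j * (-1) ^ j = 1 := by rw [← mul_pow]; simp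
  rw [poch_neg_natCast_div_factorial, poch_neg_natCast_div_factorial, hsign]
  linear_combination ((-1) ^ j * n.choose j * n.choose (2 * m - j) : ℝ) * hsq

noncomputable def pochDivFactorial (j : ℕ) : ℝ[X] := C (j ! : ℝ)⁻¹ * ascPochhammer ℝ j

theorem eval_pochDivFactorial (x : ℝ) (j : ℕ) :
    (pochDivFactorial j).eval x = poch x j / j ! := by
  simp [pochDivFactorial, poch, div_eq_inv_mul]

theorem sum_range_neg_one_pow_mul_pochDivFactorial (m : ℕ) :
    ∑ j ∈ range (2 * m + 1), C ((-1) ^ j) * pochDivFactorial j * pochDivFactorial (2 * m - j) =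
      pochDivFactorial m := by
  apply eq_of_infinite_eval_eq
  refine (Set.infinite_range_of_injective (neg_injective.comp Nat.cast_injective)).mono ?_
  rintro _ ⟨n, rfl⟩
  simpa only [Set.mem_ofPred_eq, Function.comp_apply, eval_finsetSum, eval_mul, eval_C,
    eval_pochDivFactorial]
    using sum_range_neg_one_pow_mul_poch_neg_natCast n m

theorem stmt4 (k : ℝ) (m : ℕ) :
    ∑ j ∈ Finset.range (2 * m + 1),
        (-1 : ℝ) ^ j * poch k j * poch k (2 * m - j) /
          ((Nat.factorial j : ℝ) * (Nat.factorial (2 * m - j) : ℝ)) =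
      poch k m / (Nat.factorial m : ℝ) := by
  have := congrArg (eval k) (sum_range_neg_one_pow_mul_pochDivFactorial m)
  simp only [eval_finsetSum, eval_mul, eval_C, eval_pochDivFactorial] at this
  rw [← this]
  refine sum_congr rfl fun j _ => ?_
  ring
end

section
/- Let p ≥ 1 and N ≥ 0 be integers, k a real number, and x_1,…,x_p real numbers. Then Σ over all (j_1,…,j_{2p}) ∈ ℕ^{2p} with j_1+⋯+j_{2p} = 2N of (−1)^{j_1+⋯+j_p} (Π_{s=1}^{2p} (k)_{j_s}/j_s!) (Π_{s=1}^p x_s^{j_s+j_{s+p}}) equals Σ over all (m_1,…,m_p) ∈ ℕ^p with m_1+⋯+m_p = N of Π_{s=1}^p (k)_{m_s} x_s^{2m_s} / m_s!. -/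
/-
Write `f = ∑ (k)_j X^j / j!` for the binomial series `(1 - X)^{-k}`. The left-hand side is the
coefficient of `X^{2N}` in `∏_s f(-x_s X) f(x_s X)`, so everything follows from the identity
`f(-X) f(X) = f(X^2)` of formal power series. Since `(1 - X) f' = k f`, the product
`P = f(-X) f(X)` satisfies `(1 - X^2) P' = 2k X P`, i.e. `(n + 2) P_{n+2} = (n + 2k) P_n`; together
with `P_0 = 1` and `P_1 = 0` this is exactly the recurrence of the coefficients of `f(X^2)`.
Hence the product is `∏_s f(x_s^2 X^2)`, whose coefficient of `X^{2N}` is the right-hand side.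
-/

open Real MeasureTheory

theorem Fin.val_add_lt_two_mul {p : ℕ} (i : Fin p) : i + p < 2 * p := by
  omega

theorem Fin.prod_univ_two_mul {M : Type*} [CommMonoid M] (p : ℕ) (g : Fin (2 * p) → M) :
    ∏ s, g s = ∏ i : Fin p,
      g (Fin.castLE (Nat.le_mul_of_pos_left p two_pos) i) * g ⟨i + p, i.val_add_lt_two_mul⟩ := by
  rw [← (finCongr (two_mul p).symm).prod_comp, Fin.prod_univ_add, ← Finset.prod_mul_distrib]
  refine Finset.prod_congr rfl fun i _ => ?_
  congr 2
  ext
  simp [add_comm]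

open PowerSeries

section

variable {R : Type*} [CommRing R] {P : R⟦X⟧} {c : R}

theorem PowerSeries.coeff_X_mul_derivative (f : R⟦X⟧) (n : ℕ) :
    coeff n (X * d⁄dX R f) = n * coeff n f := by
  cases n with
  | zero => simp
  | succ n => rw [coeff_succ_X_mul, coeff_derivative, mul_comm]; push_cast; rfl

theorem PowerSeries.coeff_succ_succ_of_ode (h : (1 - X ^ 2) * d⁄dX R P = C c * X * P) (n : ℕ) :
    (n + 2) * coeff (n + 2) P = (n + c) * coeff n P := by
  have h := congrArg (coeff (n + 1)) h
  rw [sub_mul, one_mul, map_sub, pow_two, mul_assoc X X, coeff_succ_X_mul, coeff_X_mul_derivative,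
    coeff_derivative, mul_assoc (C c) X, coeff_C_mul, coeff_succ_X_mul] at h
  push_cast at h
  linear_combination h

theorem PowerSeries.coeff_one_of_ode (h : (1 - X ^ 2) * d⁄dX R P = C c * X * P) :
    coeff 1 P = 0 := by
  have h := congrArg (coeff 0) h
  rw [sub_mul, one_mul, map_sub, pow_two, mul_assoc X X, coeff_zero_X_mul, coeff_derivative,
    mul_assoc (C c) X, coeff_C_mul, coeff_zero_X_mul] at h
  simpa using h

theorem PowerSeries.rescale_expand (a : R) (f : R⟦X⟧) :
    rescale a (expand 2 two_ne_zero f) = expand 2 two_ne_zero (rescale (a ^ 2) f) := by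
  ext n
  simp only [coeff_rescale, coeff_expand]
  split_ifs with h
  · obtain ⟨m, rfl⟩ := h
    rw [Nat.mul_div_cancel_left m two_pos, pow_mul]
  · rw [mul_zero]

theorem PowerSeries.sum_antidiagonalTuple_prod_coeff {m : ℕ} (F : Fin m → R⟦X⟧) (n : ℕ) :
    ∑ t ∈ Finset.Nat.antidiagonalTuple m n, ∏ s, coeff (t s) (F s) = coeff n (∏ s, F s) := by
  classical
  rw [coeff_prod]
  refine Finset.sum_nbij' (fun t => Finsupp.equivFunOnFinite.symm t) (fun l => ⇑l)
    ?_ ?_ ?_ ?_ ?_ <;> intro t ht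
  all_goals simp_all [Finset.Nat.mem_antidiagonalTuple]

theorem PowerSeries.sum_antidiagonalTuple_two_mul_prod_coeff {p : ℕ} (F G : Fin p → R⟦X⟧) (n : ℕ) :
    ∑ t ∈ Finset.Nat.antidiagonalTuple (2 * p) n,
        ∏ i : Fin p, coeff (t (Fin.castLE (Nat.le_mul_of_pos_left p two_pos) i)) (F i) *
          coeff (t ⟨i + p, i.val_add_lt_two_mul⟩) (G i) =
      coeff n (∏ i, F i * G i) := by
  let H : Fin (2 * p) → R⟦X⟧ := fun s => if h : s < p then F ⟨s, h⟩ else G ⟨s - p, by omega⟩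
  have h := sum_antidiagonalTuple_prod_coeff H n
  simp only [Fin.prod_univ_two_mul] at h
  simpa [H] using h

end

theorem poch_succ (a : ℝ) (m : ℕ) : poch a (m + 1) = poch a m * (a + m) :=
  ascPochhammer_succ_eval m a

/-- The binomial series `(1 - X)^{-k}`. -/
noncomputable def pochSeries (k : ℝ) : ℝ⟦X⟧ := mk fun j => poch k j / j.factorial

theorem coeff_pochSeries (k : ℝ) (j : ℕ) :
    coeff j (pochSeries k) = poch k j / j.factorial :=
  coeff_mk _ _

theorem coeff_pochSeries_succ (k : ℝ) (n : ℕ) :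
    (n + 1) * coeff (n + 1) (pochSeries k) = (k + n) * coeff n (pochSeries k) := by
  rw [coeff_pochSeries, coeff_pochSeries, poch_succ, Nat.factorial_succ]
  have : (n.factorial : ℝ) ≠ 0 := by positivity
  push_cast
  field_simp

theorem rescale_pochSeries_ode (k a : ℝ) :
    (1 - C a * X) * d⁄dX ℝ (rescale a (pochSeries k)) = C (a * k) * rescale a (pochSeries k) := by
  ext n
  have h := coeff_pochSeries_succ k n
  rw [sub_mul, one_mul, mul_assoc, map_sub, coeff_C_mul, coeff_X_mul_derivative, coeff_derivative,
    coeff_C_mul, coeff_rescale, coeff_rescale]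
  linear_combination a ^ (n + 1) * h

theorem rescale_neg_one_mul_pochSeries_ode (k : ℝ) :
    (1 - X ^ 2) * d⁄dX ℝ (rescale (-1) (pochSeries k) * pochSeries k) =
      C (2 * k) * X * (rescale (-1) (pochSeries k) * pochSeries k) := by
  have hA := rescale_pochSeries_ode k (-1)
  have hB := rescale_pochSeries_ode k 1
  simp only [rescale_one, RingHom.id_apply, map_one, one_mul, map_neg, neg_mul] at hA hB
  simp only [Derivation.leibniz, smul_eq_mul, map_mul, map_ofNat]
  linear_combination (1 - X) * pochSeries k * hA + (1 + X) * rescale (-1) (pochSeries k) * hB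

theorem rescale_neg_one_mul_pochSeries (k : ℝ) :
    rescale (-1) (pochSeries k) * pochSeries k = expand 2 two_ne_zero (pochSeries k) := by
  set P := rescale (-1) (pochSeries k) * pochSeries k
  have hode := rescale_neg_one_mul_pochSeries_ode k
  have hrec := coeff_succ_succ_of_ode hode
  have heven : ∀ m, coeff (2 * m) P = coeff m (pochSeries k) := by
    intro m
    induction m with
    | zero => simp [P, coeff_mul, coeff_pochSeries, poch]
    | succ m ih =>
      have h1 := hrec (2 * m)
      have h2 := coeff_pochSeries_succ k m
      rw [ih] at h1
      have : (2 * m + 2 : ℝ) ≠ 0 := by positivity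
      rw [show 2 * (m + 1) = 2 * m + 2 by ring]
      apply mul_left_cancel₀ this
      push_cast at h1 ⊢
      linear_combination h1 - 2 * h2
  have hodd : ∀ m, coeff (2 * m + 1) P = 0 := by
    intro m
    induction m with
    | zero => exact coeff_one_of_ode hode
    | succ m ih =>
      have h1 := hrec (2 * m + 1)
      rw [ih, mul_zero] at h1
      rw [show 2 * (m + 1) + 1 = 2 * m + 1 + 2 by ring]
      exact (mul_eq_zero.mp h1).resolve_left (by positivity)
  ext n
  obtain ⟨m, rfl | rfl⟩ := Nat.even_or_odd' n
  · rw [heven, coeff_expand_mul]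
  · rw [hodd, coeff_expand_of_not_dvd _ _ _ (by omega)]

theorem rescale_neg_mul_rescale_pochSeries (k a : ℝ) :
    rescale (-a) (pochSeries k) * rescale a (pochSeries k) =
      expand 2 two_ne_zero (rescale (a ^ 2) (pochSeries k)) := by
  rw [← rescale_expand, ← rescale_neg_one_mul_pochSeries, map_mul, rescale_rescale, neg_one_mul]

theorem stmt5 (p N : ℕ) (k : ℝ) (x : Fin p → ℝ) :
    ∑ t ∈ Finset.Nat.antidiagonalTuple (2 * p) (2 * N),
        (-1 : ℝ) ^ (∑ s : Fin p, t (Fin.castLE (by omega) s)) *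
          (∏ s : Fin (2 * p), poch k (t s) / (Nat.factorial (t s) : ℝ)) *
          ∏ s : Fin p,
            x s ^ (t (Fin.castLE (by omega) s) + t ⟨s.1 + p, by have := s.isLt; omega⟩) =
      ∑ m ∈ Finset.Nat.antidiagonalTuple p N,
        ∏ s : Fin p, poch k (m s) * x s ^ (2 * m s) / (Nat.factorial (m s) : ℝ) := by
  have hcoeff : ∀ (a : ℝ) (j : ℕ),
      poch k j * a ^ j / j.factorial = coeff j (rescale a (pochSeries k)) := by
    intro a j
    rw [coeff_rescale, coeff_pochSeries]
    ring
  simp_rw [pow_mul, hcoeff]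
  rw [sum_antidiagonalTuple_prod_coeff, ← coeff_expand_mul 2 two_ne_zero, map_prod]
  simp_rw [← rescale_neg_mul_rescale_pochSeries]
  rw [← sum_antidiagonalTuple_two_mul_prod_coeff]
  refine Finset.sum_congr rfl fun t _ => ?_
  rw [Fin.prod_univ_two_mul, ← Finset.prod_pow_eq_pow_sum, ← Finset.prod_mul_distrib,
    ← Finset.prod_mul_distrib]
  refine Finset.prod_congr rfl fun i _ => ?_
  simp only [coeff_rescale, coeff_pochSeries]
  ring
end

section
/- Let n ≥ 3 be an integer, k > 0, and Φ : ℝ → ℝ a continuous function. Then ∫_{Σ_n} (Π_{s=1}^n u_s^{k−1}) Φ(Σ_{s=1}^n u_s cos(π/(2n) + 2sπ/n)) du_1⋯du_{n−1} = ∫_{Σ_n} (Π_{s=1}^n u_s^{k−1}) Φ(Σ_{s=1}^n u_s cos(π/(2n) − (2s−1)π/n)) du_1⋯du_{n−1}. -/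
open Real MeasureTheory

/-!
The simplex integral is invariant under every permutation of the `n` coordinates. Exchanging a
coordinate `u_j` with the implicit last coordinate `u_n = 1 - ∑ u` is, in the free coordinates,
the affine involution replacing `u_j` by `1 - ∑ u`: it maps the domain onto itself and preserves
Lebesgue measure, because its linear part is an involution and so has determinant `±1`. These
transpositions generate the symmetric group. The two integrands differ by the cyclic shift
`s ↦ s + 1` of the coordinates, since the two angles attached to `s` and `s + 1` add up to a
multiple of `2π`.
-/

open Finset Function Equiv

theorem LinearMap.measurePreserving_of_involutive {E : Type*} [NormedAddCommGroup E]
    [NormedSpace ℝ E] [MeasurableSpace E] [BorelSpace E] [FiniteDimensional ℝ E]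
    (μ : Measure E) [μ.IsAddHaarMeasure] {f : E →ₗ[ℝ] E} (hf : Involutive f) :
    MeasurePreserving f μ μ := by
  have hdet : |LinearMap.det f| = 1 := by
    have : LinearMap.det f * LinearMap.det f = 1 := by
      rw [← LinearMap.det_comp, show f ∘ₗ f = LinearMap.id from LinearMap.ext hf,
        LinearMap.det_id]
    rw [← abs_mul_abs_self, mul_self_eq_one_iff] at this
    exact this.resolve_right (neg_one_lt_zero.trans_le (abs_nonneg _)).ne'
  refine ⟨f.continuous_of_finiteDimensional.measurable, ?_⟩
  rw [Measure.map_linearMap_addHaar_eq_smul_addHaar μ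
    (by rw [← abs_ne_zero, hdet]; exact one_ne_zero), abs_inv, hdet]
  simp

theorem Fintype.sum_update {ι M : Type*} [Fintype ι] [DecidableEq ι] [AddCommGroup M]
    (u : ι → M) (j : ι) (a : M) : ∑ s, update u j a s = ∑ s, u s + (a - u j) := by
  rw [sum_update_of_mem (mem_univ j), sdiff_singleton_eq_erase, sum_erase_eq_sub (mem_univ j)]
  abel

def simplexDomain (m : ℕ) : Set (Fin m → ℝ) := {u | (∀ s, 0 ≤ u s) ∧ ∑ s, u s ≤ 1}

noncomputable def simplexPoint {m : ℕ} (u : Fin m → ℝ) : Fin (m + 1) → ℝ :=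
  Fin.snoc u (1 - ∑ s, u s)

theorem simplexIntegral_succ (m : ℕ) (f : (Fin (m + 1) → ℝ) → ℝ) :
    simplexIntegral (m + 1) f = ∫ u in simplexDomain m, f (simplexPoint u) :=
  rfl

theorem mem_simplexDomain_iff {m : ℕ} {u : Fin m → ℝ} :
    u ∈ simplexDomain m ↔ ∀ i, 0 ≤ simplexPoint u i := by
  simp [simplexDomain, simplexPoint, Fin.forall_fin_succ']

section SwapWithLast

variable {m : ℕ}

def swapWithLast (j : Fin m) (u : Fin m → ℝ) : Fin m → ℝ := update u j (1 - ∑ s, u s)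

theorem sum_swapWithLast (j : Fin m) (u : Fin m → ℝ) : ∑ s, swapWithLast j u s = 1 - u j := by
  rw [swapWithLast, Fintype.sum_update]
  ring

theorem swapWithLast_involutive (j : Fin m) : Involutive (swapWithLast j) := fun u => by
  rw [swapWithLast, sum_swapWithLast, swapWithLast, update_idem, sub_sub_cancel, update_eq_self]

theorem simplexPoint_swapWithLast (j : Fin m) (u : Fin m → ℝ) :
    simplexPoint (swapWithLast j u) = simplexPoint u ∘ swap j.castSucc (Fin.last m) := by
  ext i
  induction i using Fin.lastCases with
  | last => simp [simplexPoint, sum_swapWithLast]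
  | cast i =>
    rcases eq_or_ne i j with rfl | hij
    · simp [simplexPoint, swapWithLast]
    · rw [comp_apply, swap_apply_of_ne_of_ne (Fin.castSucc_injective m |>.ne hij)
        (Fin.castSucc_ne_last i)]
      simp [simplexPoint, swapWithLast, hij]

theorem preimage_swapWithLast_simplexDomain (j : Fin m) :
    swapWithLast j ⁻¹' simplexDomain m = simplexDomain m := by
  have maps_to : ∀ u ∈ simplexDomain m, swapWithLast j u ∈ simplexDomain m := fun u hu => by
    rw [mem_simplexDomain_iff, simplexPoint_swapWithLast] at *
    exact fun i => hu _
  ext u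
  exact ⟨fun hu => swapWithLast_involutive j u ▸ maps_to _ hu, maps_to u⟩

def swapWithLastLinear (j : Fin m) : (Fin m → ℝ) →ₗ[ℝ] (Fin m → ℝ) where
  toFun u := update u j (-∑ s, u s)
  map_add' u v := by simp only [Pi.add_apply, sum_add_distrib, neg_add, ← update_add]
  map_smul' c u := by simp [← mul_sum, ← update_smul]

theorem swapWithLastLinear_involutive (j : Fin m) : Involutive (swapWithLastLinear j) :=
  fun u => by simp [swapWithLastLinear, Fintype.sum_update, update_idem]

theorem swapWithLast_eq (j : Fin m) :
    swapWithLast j = fun u => swapWithLastLinear j u + Pi.single j 1 := by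
  ext u i
  rcases eq_or_ne i j with rfl | hij
  · simp only [swapWithLast, swapWithLastLinear, LinearMap.coe_mk, AddHom.coe_mk, Pi.add_apply,
      update_self, Pi.single_eq_same]
    ring
  · simp [swapWithLast, swapWithLastLinear, hij]

theorem measurePreserving_swapWithLast (j : Fin m) :
    MeasurePreserving (swapWithLast j) volume volume := by
  rw [swapWithLast_eq]
  exact (measurePreserving_add_right volume _).comp
    ((swapWithLastLinear j).measurePreserving_of_involutive volume
      (swapWithLastLinear_involutive j))

theorem setIntegral_simplexDomain_comp_swap_last (j : Fin m) (G : (Fin (m + 1) → ℝ) → ℝ) :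
    ∫ u in simplexDomain m, G (simplexPoint u ∘ swap j.castSucc (Fin.last m)) =
      ∫ u in simplexDomain m, G (simplexPoint u) := by
  have hT := measurePreserving_swapWithLast j
  simp_rw [← simplexPoint_swapWithLast]
  simpa only [preimage_swapWithLast_simplexDomain, comp_apply] using
    hT.setIntegral_preimage_emb (MeasurableEquiv.ofInvolutive _ (swapWithLast_involutive j)
      hT.measurable).measurableEmbedding (G ∘ simplexPoint) (simplexDomain m)

end SwapWithLast

def simplexInvariantPerms (m : ℕ) : Submonoid (Perm (Fin (m + 1))) where
  carrier := {σ | ∀ F : (Fin (m + 1) → ℝ) → ℝ,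
    simplexIntegral (m + 1) (fun v => F (v ∘ σ)) = simplexIntegral (m + 1) F}
  mul_mem' {_ τ} hσ hτ F := (hσ fun v => F (v ∘ τ)).trans (hτ F)
  one_mem' _ := rfl

theorem swap_last_mem_simplexInvariantPerms {m : ℕ} (i : Fin (m + 1)) :
    swap i (Fin.last m) ∈ simplexInvariantPerms m := by
  induction i using Fin.lastCases with
  | last => exact fun F => by rw [swap_self]; rfl
  | cast j => exact fun F => setIntegral_simplexDomain_comp_swap_last j F

theorem simplexInvariantPerms_eq_top (m : ℕ) : simplexInvariantPerms m = ⊤ := by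
  rw [eq_top_iff, ← Perm.mclosure_isSwap, Submonoid.closure_le]
  rintro _ ⟨x, y, -, rfl⟩
  refine SubmonoidClass.swap_mem_trans _ (swap_last_mem_simplexInvariantPerms x) ?_
  rw [swap_comm]
  exact swap_last_mem_simplexInvariantPerms y

theorem simplexIntegral_comp_perm {m : ℕ} (σ : Perm (Fin (m + 1)))
    (F : (Fin (m + 1) → ℝ) → ℝ) :
    simplexIntegral (m + 1) (fun v => F (v ∘ σ)) = simplexIntegral (m + 1) F :=
  (simplexInvariantPerms_eq_top m ▸ Submonoid.mem_top σ : σ ∈ simplexInvariantPerms m) F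

theorem cos_angle_eq_cos_angle_succ (n : ℕ) [NeZero n] (t : Fin n) :
    cos (π / (2 * n) + 2 * ((t : ℝ) + 1) * π / n) =
      cos (π / (2 * n) - (2 * (((t + 1 : Fin n) : ℕ) + 1 : ℝ) - 1) * π / n) := by
  have hn : (n : ℝ) ≠ 0 := NeZero.ne _
  obtain ⟨q, hq⟩ : ∃ q : ℕ, ((t + 1 : Fin n) : ℕ) + n * q = t + 1 :=
    ⟨(t + 1) / n, by simp [Fin.val_add, Nat.mod_add_div]⟩
  have hq' : (((t + 1 : Fin n) : ℕ) : ℝ) = t + 1 - n * q := by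
    have := congrArg (Nat.cast : ℕ → ℝ) hq
    push_cast at this
    linarith
  rw [hq', ← cos_nat_mul_two_pi_sub _ q]
  congr 1
  field_simp
  ring

theorem stmt13_general (n : ℕ) (k : ℝ) (Φ : ℝ → ℝ) :
    simplexIntegral n (fun u =>
        (∏ s, u s ^ (k - 1)) *
          Φ (∑ s : Fin n, u s * Real.cos (π / (2 * n) + 2 * ((s : ℝ) + 1) * π / n))) =
      simplexIntegral n (fun u =>
        (∏ s, u s ^ (k - 1)) *
          Φ (∑ s : Fin n, u s * Real.cos (π / (2 * n) - (2 * ((s : ℝ) + 1) - 1) * π / n))) := by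
  rcases n with _ | m
  · simp
  conv_rhs => rw [← simplexIntegral_comp_perm (Equiv.subRight 1)]
  congr with v
  congr 1
  · exact (Equiv.prod_comp _ fun s => v s ^ (k - 1)).symm
  · refine congrArg Φ (Fintype.sum_equiv (Equiv.addRight 1) _ _ fun s => ?_)
    simp only [comp_apply, coe_addRight, subRight_apply, add_sub_cancel_right,
      cos_angle_eq_cos_angle_succ]

theorem stmt13 (n : ℕ) (hn : 3 ≤ n) (k : ℝ) (hk : 0 < k) (Φ : ℝ → ℝ) (hΦ : Continuous Φ) :
    simplexIntegral n (fun u =>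
        (∏ s, u s ^ (k - 1)) *
          Φ (∑ s : Fin n, u s * Real.cos (π / (2 * n) + 2 * ((s : ℝ) + 1) * π / n))) =
      simplexIntegral n (fun u =>
        (∏ s, u s ^ (k - 1)) *
          Φ (∑ s : Fin n, u s * Real.cos (π / (2 * n) - (2 * ((s : ℝ) + 1) - 1) * π / n))) :=
  stmt13_general n k Φ
end

section
/- Let n ≥ 1 be an integer, y > 0, and X a real number with |X| < √(1+y). Then ∫_0^∞ v^{(n−1)/2} e^{−(1+y)v} (Σ_{N≥0} [Γ((N+n)/2)/N!] (2X)^N v^{N/2}) dv = √π · 2^{1−n} · Γ(n) · (1+y)^{−(n+1)/2} · (1 − X/√(1+y))^{−n}. -/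
/-!
Integrate term by term. With `a = 1 + y`, the `N`-th term is a Gamma integral,
`∫ v ^ (s - 1) * exp (-a v) = Γ(s) a⁻ˢ` with `s = (N + n + 1) / 2`, and Legendre's duplication
formula turns `Γ((N + n) / 2) Γ((N + n + 1) / 2)` into a multiple of `(N + n - 1)!`. The `N`-th term
is therefore a constant times `C(N + n - 1, n - 1) tᴺ` with `t = X / √a`, and the negative binomial
series sums these to `(1 - t)⁻ⁿ`. The same computation with `|X|` in place of `X` gives the absolute
convergence that justifies exchanging sum and integral.
-/

open Real MeasureTheory

open scoped Nat

lemma Gamma_add_one_div_two_mul_Gamma_add_two_div_two (m : ℕ) :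
    Gamma ((m + 1) / 2) * Gamma ((m + 2) / 2) = √π * m ! / 2 ^ m := by
  have h := Gamma_mul_Gamma_add_half (((m : ℝ) + 1) / 2)
  rw [show ((m : ℝ) + 1) / 2 + 1 / 2 = (m + 2) / 2 by ring, mul_div_cancel₀ _ two_ne_zero,
    Gamma_nat_eq_factorial, show (1 : ℝ) - (m + 1) = -(m : ℕ) by ring, rpow_neg zero_le_two,
    rpow_natCast] at h
  rw [h, div_eq_mul_inv]
  ring

lemma one_div_rpow_natCast_add_div_two {a : ℝ} (ha : 0 < a) (N : ℕ) (s : ℝ) :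
    (1 / a) ^ ((N + s) / 2) = a ^ (-s / 2) / √a ^ N := by
  rw [sqrt_eq_rpow, ← rpow_natCast, ← rpow_mul ha.le, ← rpow_sub ha, one_div, inv_rpow ha.le,
    ← rpow_neg ha.le]
  ring_nf

/-- The `N`-th term of the expanded integrand for `n = k + 1`, written as a Gamma integrand. -/
noncomputable def gammaSeriesTerm (k N : ℕ) (a x v : ℝ) : ℝ :=
  Gamma ((N + k + 1) / 2) / N ! * (2 * x) ^ N *
    (v ^ (((N : ℝ) + k + 2) / 2 - 1) * exp (-(a * v)))

lemma integral_gammaSeriesTerm (k N : ℕ) {a : ℝ} (ha : 0 < a) (x : ℝ) :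
    ∫ v in Set.Ioi 0, gammaSeriesTerm k N a x v =
      √π * k ! / 2 ^ k * a ^ (-((k : ℝ) + 2) / 2) * ((N + k).choose k * (x / √a) ^ N) := by
  have hfac : ((N + k)! : ℝ) = (N + k).choose k * N ! * k ! := by
    exact_mod_cast (Nat.add_choose_mul_factorial_mul_factorial N k).symm
  have hGamma := Gamma_add_one_div_two_mul_Gamma_add_two_div_two (N + k)
  have hpow : (1 / a) ^ (((N : ℝ) + k + 2) / 2) = a ^ (-((k : ℝ) + 2) / 2) / √a ^ N := by
    rw [add_assoc]
    exact one_div_rpow_natCast_add_div_two ha N _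
  push_cast at hGamma
  simp only [gammaSeriesTerm]
  rw [integral_const_mul, integral_rpow_mul_exp_neg_mul_Ioi (by positivity) ha, hpow]
  calc _ = (Gamma ((N + k + 1) / 2) * Gamma ((N + k + 2) / 2)) / N ! * (2 * x) ^ N *
          (a ^ (-((k : ℝ) + 2) / 2) / √a ^ N) := by ring
    _ = _ := by
      rw [hGamma, hfac, mul_pow, div_pow, pow_add]
      field_simp

lemma integrableOn_gammaSeriesTerm (k N : ℕ) {a : ℝ} (ha : 0 < a) (x : ℝ) :
    IntegrableOn (gammaSeriesTerm k N a x) (Set.Ioi 0) := by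
  have hs : -1 < ((N : ℝ) + k + 2) / 2 - 1 := by
    have : (0 : ℝ) ≤ N + k := by positivity
    linarith
  have h := integrableOn_rpow_mul_exp_neg_mul_rpow hs one_pos ha
  simp only [rpow_one, neg_mul] at h
  exact h.const_mul _

lemma norm_gammaSeriesTerm (k N : ℕ) (a x : ℝ) {v : ℝ} (hv : 0 ≤ v) :
    ‖gammaSeriesTerm k N a x v‖ = gammaSeriesTerm k N a |x| v := by
  have hGamma : 0 < Gamma ((N + k + 1) / 2) := Gamma_pos_of_pos (by positivity)
  simp only [gammaSeriesTerm, norm_mul, norm_div, norm_pow, norm_of_nonneg hGamma.le,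
    norm_eq_abs, Nat.abs_cast, abs_two, abs_exp, abs_rpow_of_nonneg hv, abs_of_nonneg hv]

lemma integral_tsum_gammaSeriesTerm (k : ℕ) {a x : ℝ} (ha : 0 < a) (hx : |x| < √a) :
    ∫ v in Set.Ioi 0, ∑' N, gammaSeriesTerm k N a x v =
      √π * k ! / 2 ^ k * a ^ (-((k : ℝ) + 2) / 2) / (1 - x / √a) ^ (k + 1) := by
  have hsqrt : 0 < √a := sqrt_pos.mpr ha
  have ht : ‖x / √a‖ < 1 := by
    rwa [norm_div, norm_of_nonneg hsqrt.le, div_lt_one hsqrt]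
  have hnorm_integral (N : ℕ) : ∫ v in Set.Ioi 0, ‖gammaSeriesTerm k N a x v‖ =
      √π * k ! / 2 ^ k * a ^ (-((k : ℝ) + 2) / 2) * ((N + k).choose k * ‖x / √a‖ ^ N) := by
    rw [setIntegral_congr_fun measurableSet_Ioi fun v hv ↦ norm_gammaSeriesTerm k N a x
      (le_of_lt hv), integral_gammaSeriesTerm k N ha, norm_div, norm_of_nonneg hsqrt.le,
      norm_eq_abs]
  have hsummable : Summable fun N ↦ ∫ v in Set.Ioi 0, ‖gammaSeriesTerm k N a x v‖ := by
    simp only [hnorm_integral]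
    exact (summable_choose_mul_geometric_of_norm_lt_one k (r := ‖x / √a‖)
      (by rwa [norm_norm])).mul_left _
  rw [← integral_tsum_of_summable_integral_norm
    (fun N ↦ integrableOn_gammaSeriesTerm k N ha x) hsummable]
  simp only [integral_gammaSeriesTerm k _ ha, tsum_mul_left]
  rw [tsum_choose_mul_geometric_of_norm_lt_one k ht]
  ring

theorem stmt14_general (n : ℕ) (hn : 1 ≤ n) (y : ℝ) (X : ℝ)
    (hX : |X| < Real.sqrt (1 + y)) :
    ∫ v in Set.Ioi (0 : ℝ), v ^ (((n : ℝ) - 1) / 2) * Real.exp (-(1 + y) * v) *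
        ∑' N : ℕ, Real.Gamma (((N : ℝ) + n) / 2) / (Nat.factorial N : ℝ) * (2 * X) ^ N *
          v ^ ((N : ℝ) / 2) =
      Real.sqrt π * (2 : ℝ) ^ ((1 : ℝ) - n) * Real.Gamma n * (1 + y) ^ (-((n : ℝ) + 1) / 2) *
        (1 - X / Real.sqrt (1 + y)) ^ (-(n : ℝ)) := by
  obtain ⟨k, rfl⟩ : ∃ k, n = k + 1 := ⟨n - 1, by omega⟩
  have ha : 0 < 1 + y := sqrt_pos.mp ((abs_nonneg X).trans_lt hX)
  have h1t : 0 < 1 - X / √(1 + y) := by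
    have := (div_lt_one (sqrt_pos.mpr ha)).mpr ((le_abs_self X).trans_lt hX)
    linarith
  have hseries : ∀ v ∈ Set.Ioi (0 : ℝ), v ^ ((((k + 1 : ℕ) : ℝ) - 1) / 2) * exp (-(1 + y) * v) *
      ∑' N : ℕ, Gamma (((N : ℝ) + (k + 1 : ℕ)) / 2) / N ! * (2 * X) ^ N * v ^ ((N : ℝ) / 2) =
      ∑' N, gammaSeriesTerm k N (1 + y) X v := by
    intro v hv
    rw [← tsum_mul_left]
    refine tsum_congr fun N ↦ ?_
    have hpow : v ^ ((((k + 1 : ℕ) : ℝ) - 1) / 2) * v ^ ((N : ℝ) / 2) =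
        v ^ (((N : ℝ) + k + 2) / 2 - 1) := by
      rw [← rpow_add hv]
      push_cast
      ring_nf
    simp only [gammaSeriesTerm, ← hpow]
    push_cast
    ring_nf
  rw [setIntegral_congr_fun measurableSet_Ioi hseries, integral_tsum_gammaSeriesTerm k ha hX]
  push_cast
  rw [Gamma_nat_eq_factorial, show (1 : ℝ) - (k + 1) = -(k : ℕ) by ring, rpow_neg zero_le_two,
    rpow_natCast, show -((k : ℝ) + 1 + 1) / 2 = -(k + 2) / 2 by ring, rpow_neg h1t.le,
    ← Nat.cast_add_one, rpow_natCast]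
  ring

theorem stmt14 (n : ℕ) (hn : 1 ≤ n) (y : ℝ) (hy : 0 < y) (X : ℝ)
    (hX : |X| < Real.sqrt (1 + y)) :
    ∫ v in Set.Ioi (0 : ℝ), v ^ (((n : ℝ) - 1) / 2) * Real.exp (-(1 + y) * v) *
        ∑' N : ℕ, Real.Gamma (((N : ℝ) + n) / 2) / (Nat.factorial N : ℝ) * (2 * X) ^ N *
          v ^ ((N : ℝ) / 2) =
      Real.sqrt π * (2 : ℝ) ^ ((1 : ℝ) - n) * Real.Gamma n * (1 + y) ^ (-((n : ℝ) + 1) / 2) *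
        (1 - X / Real.sqrt (1 + y)) ^ (-(n : ℝ)) :=
  stmt14_general n hn y X hX
end
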